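/- Fix m ≥ 1, a strictly increasing sequence t = (t_0, …, t_{m+1}) with t_0 = 0 and t_i ≥ 0, and a vector γ = (γ_0, …, γ_{m+1}) with γ_0, …, γ_m > 0 and γ_{m+1} = 0. Let γ' be the lower convex hull of the points {(t_i, γ_i) : 0 ≤ i ≤ m+1}, with slopes θ_i = (γ'_{i+1} − γ'_i)/(t_{i+1} − t_i), and set q*_i = √(θ_i/θ_0) for 0 ≤ i ≤ m. Then q* ∈ A^{(m)} and q* minimizes R^{(m)}(q; t, γ) = (∑_{i=0}^m q_i(t_{i+1} − t_i))(∑_{i=0}^m (γ_i − γ_{i+1})/q_i) over A^{(m)} = {q ∈ ℝ^{m+1} : 1 = q_0 ≥ q_1 ≥ … ≥ q_m > 0}. -/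

import Mathlib

/-- The slope sequence of `γ'` relative to the abscissae `t`. -/
noncomputable def slopeSeq (t γ' : ℕ → ℝ) : ℕ → ℝ :=
  fun i => (γ' (i + 1) - γ' i) / (t (i + 1) - t i)

/-- The set `A^(m)`: `1 = q_0 ≥ q_1 ≥ ⋯ ≥ q_m > 0`. -/
def memAm (m : ℕ) (q : ℕ → ℝ) : Prop :=
  q 0 = 1 ∧ (∀ i, i < m → q (i + 1) ≤ q i) ∧ ∀ i, i ≤ m → 0 < q i

/-- `R^(m)(q; t, γ) = (∑_{i=0}^m q_i (t_{i+1} - t_i)) (∑_{i=0}^m (γ_i - γ_{i+1})/q_i)`. -/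
noncomputable def Rm (m : ℕ) (q t γ : ℕ → ℝ) : ℝ :=
  (∑ i ∈ Finset.range (m + 1), q i * (t (i + 1) - t i)) *
    ∑ i ∈ Finset.range (m + 1), (γ i - γ (i + 1)) / q i

/-!
The lower hull `γ'` agrees with `γ` at both endpoints and wherever its slope jumps (otherwise it
could be raised there), while `q*` is constant between consecutive jumps. Abel summation then gives
`R(q; γ') ≤ R(q; γ)` for every nonincreasing `q`, with equality at `q*`. By Cauchy–Schwarz,
`R(q; γ') ≥ (∑ √((γ'_i - γ'_{i+1}) (t_{i+1} - t_i)))²`, with equality when `q` is proportional to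
`√(-θ)`, that is, at `q*`.
-/
open Finset Function

def HasMonotoneSlopes (m : ℕ) (t δ : ℕ → ℝ) : Prop :=
  ∀ i, i + 1 ≤ m → slopeSeq t δ i ≤ slopeSeq t δ (i + 1)

section Slopes

variable {t δ : ℕ → ℝ}

lemma neg_slopeSeq (i : ℕ) : -slopeSeq t δ i = (δ i - δ (i + 1)) / (t (i + 1) - t i) := by
  rw [slopeSeq, ← neg_div, neg_sub]

lemma slopeSeq_nonpos_iff {i : ℕ} (ht : t i < t (i + 1)) :
    slopeSeq t δ i ≤ 0 ↔ δ (i + 1) ≤ δ i := by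
  rw [slopeSeq, div_le_iff₀ (sub_pos.2 ht), zero_mul, sub_nonpos]

lemma slopeSeq_const_mul_sub {i : ℕ} (c T : ℝ) (ht : t i < t (i + 1)) :
    slopeSeq t (fun j => c * (T - t j)) i = -c := by
  have := (sub_pos.2 ht).ne'
  simp only [slopeSeq]
  field_simp
  ring

lemma slopeSeq_update_of_ne {j k : ℕ} (v : ℝ) (hk : k ≠ j) (hk1 : k + 1 ≠ j) :
    slopeSeq t (update δ j v) k = slopeSeq t δ k := by
  simp only [slopeSeq, update_of_ne hk, update_of_ne hk1]

lemma slopeSeq_update_self_le {j : ℕ} {v : ℝ} (ht : t j < t (j + 1)) (hv : δ j ≤ v) :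
    slopeSeq t (update δ j v) j ≤ slopeSeq t δ j := by
  simp only [slopeSeq, update_self, update_of_ne (Nat.succ_ne_self j)]
  gcongr

lemma le_slopeSeq_update_succ {j : ℕ} {v : ℝ} (ht : t j < t (j + 1)) (hv : δ (j + 1) ≤ v) :
    slopeSeq t δ j ≤ slopeSeq t (update δ (j + 1) v) j := by
  simp only [slopeSeq, update_self, update_of_ne (Nat.ne_add_one j)]
  gcongr

lemma slopeSeq_le_slopeSeq_succ_iff {j : ℕ} (ha : t j < t (j + 1)) (hb : t (j + 1) < t (j + 2)) :
    slopeSeq t δ j ≤ slopeSeq t δ (j + 1) ↔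
      δ (j + 1) * (t (j + 2) - t j) ≤
        δ j * (t (j + 2) - t (j + 1)) + δ (j + 2) * (t (j + 1) - t j) := by
  rw [slopeSeq, slopeSeq, div_le_div_iff₀ (sub_pos.2 ha) (sub_pos.2 hb)]
  constructor <;> intro h <;> linarith

lemma slopeSeq_lt_slopeSeq_succ_iff {j : ℕ} (ha : t j < t (j + 1)) (hb : t (j + 1) < t (j + 2)) :
    slopeSeq t δ j < slopeSeq t δ (j + 1) ↔
      δ (j + 1) * (t (j + 2) - t j) <
        δ j * (t (j + 2) - t (j + 1)) + δ (j + 2) * (t (j + 1) - t j) := by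
  rw [slopeSeq, slopeSeq, div_lt_div_iff₀ (sub_pos.2 ha) (sub_pos.2 hb)]
  constructor <;> intro h <;> linarith

lemma HasMonotoneSlopes.monotoneOn {m : ℕ} (h : HasMonotoneSlopes m t δ) :
    MonotoneOn (slopeSeq t δ) (Set.Iic m) :=
  monotoneOn_of_le_succ Set.ordConnected_Iic fun i _ _ hi => h i hi

/-- Raising `δ j` only increases the slope to its left and decreases the one to its right, so only
the pair of slopes meeting at `j` needs checking. -/
lemma HasMonotoneSlopes.update {m j : ℕ} {v : ℝ} (ht : ∀ i, i ≤ m → t i < t (i + 1))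
    (hδ : HasMonotoneSlopes m t δ) (hv : δ j ≤ v)
    (hj : ∀ i, i + 1 = j → i + 1 ≤ m →
      slopeSeq t (Function.update δ j v) i ≤ slopeSeq t (Function.update δ j v) (i + 1)) :
    HasMonotoneSlopes m t (Function.update δ j v) := by
  intro i hi
  by_cases hij : i + 1 = j
  · exact hj i hij hi
  by_cases hji : i = j
  · subst hji
    calc slopeSeq t (Function.update δ i v) i ≤ slopeSeq t δ i :=
          slopeSeq_update_self_le (ht i (by omega)) hv
      _ ≤ slopeSeq t δ (i + 1) := hδ i hi
      _ = slopeSeq t (Function.update δ i v) (i + 1) :=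
          (slopeSeq_update_of_ne v (by omega) (by omega)).symm
  by_cases hj2 : i + 2 = j
  · subst hj2
    calc slopeSeq t (Function.update δ (i + 2) v) i = slopeSeq t δ i :=
          slopeSeq_update_of_ne v (by omega) (by omega)
      _ ≤ slopeSeq t δ (i + 1) := hδ i hi
      _ ≤ slopeSeq t (Function.update δ (i + 2) v) (i + 1) :=
          le_slopeSeq_update_succ (ht (i + 1) hi) hv
  rw [slopeSeq_update_of_ne v hji hij, slopeSeq_update_of_ne v hij (by omega)]
  exact hδ i hi

end Slopes

structure IsLowerHull (m : ℕ) (t γ γ' : ℕ → ℝ) : Prop where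
  le : ∀ i, i ≤ m + 1 → γ' i ≤ γ i
  hasMonotoneSlopes : HasMonotoneSlopes m t γ'
  le_of_hasMonotoneSlopes : ∀ δ : ℕ → ℝ, (∀ i, i ≤ m + 1 → δ i ≤ γ i) →
    HasMonotoneSlopes m t δ → ∀ i, i ≤ m + 1 → δ i ≤ γ' i

namespace IsLowerHull

variable {m : ℕ} {t γ γ' : ℕ → ℝ}

lemma le_of_update (h : IsLowerHull m t γ γ') {j : ℕ} {v : ℝ} (hj : j ≤ m + 1) (hv : v ≤ γ j)
    (hslopes : HasMonotoneSlopes m t (update γ' j v)) : v ≤ γ' j := by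
  have hle : ∀ i, i ≤ m + 1 → update γ' j v i ≤ γ i := by
    intro i hi
    rcases eq_or_ne i j with rfl | hij
    · simpa using hv
    · simpa [update_of_ne hij] using h.le i hi
  simpa using h.le_of_hasMonotoneSlopes _ hle hslopes j hj

lemma apply_zero (h : IsLowerHull m t γ γ') (ht : ∀ i, i ≤ m → t i < t (i + 1)) :
    γ' 0 = γ 0 := by
  have h0 := h.le 0 (Nat.zero_le _)
  refine h0.antisymm (h.le_of_update (Nat.zero_le _) le_rfl ?_)
  exact h.hasMonotoneSlopes.update ht h0 fun i hi _ => absurd hi (Nat.succ_ne_zero i)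

lemma apply_last (h : IsLowerHull m t γ γ') (ht : ∀ i, i ≤ m → t i < t (i + 1)) :
    γ' (m + 1) = γ (m + 1) := by
  have hm := h.le (m + 1) le_rfl
  refine hm.antisymm (h.le_of_update le_rfl le_rfl ?_)
  exact h.hasMonotoneSlopes.update ht hm fun i hi him => by omega

/-- Where the slope of the hull jumps, the hull touches `γ`: otherwise it could be raised there
up to the chord through its two neighbours. -/
lemma apply_succ_eq_of_slopeSeq_lt (h : IsLowerHull m t γ γ')
    (ht : ∀ i, i ≤ m → t i < t (i + 1)) {j : ℕ} (hj : j + 1 ≤ m)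
    (hlt : slopeSeq t γ' j < slopeSeq t γ' (j + 1)) : γ' (j + 1) = γ (j + 1) := by
  have ha := ht j (by omega)
  have hb := ht (j + 1) hj
  have hab : 0 < t (j + 2) - t j := by linarith
  set chord := (γ' j * (t (j + 2) - t (j + 1)) + γ' (j + 2) * (t (j + 1) - t j)) / (t (j + 2) - t j)
  have hchord : γ' (j + 1) < chord := by
    rw [lt_div_iff₀ hab]
    exact (slopeSeq_lt_slopeSeq_succ_iff ha hb).1 hlt
  refine (h.le (j + 1) (by omega)).antisymm (not_lt.1 fun hγ => ?_)
  set v := min (γ (j + 1)) chord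
  have hv : γ' (j + 1) < v := lt_min hγ hchord
  refine (h.le_of_update (by omega) (min_le_left _ _) ?_).not_gt hv
  refine h.hasMonotoneSlopes.update ht hv.le fun i hi _ => ?_
  obtain rfl : i = j := by omega
  rw [slopeSeq_le_slopeSeq_succ_iff ha hb, update_self, update_of_ne (by omega),
    update_of_ne (by omega), ← le_div_iff₀ hab]
  exact min_le_right _ _

/-- A small multiple of `t (m + 1) - t i` lies below `γ` and has constant slopes. -/
lemma apply_pos (h : IsLowerHull m t γ γ') (ht : ∀ i, i ≤ m → t i < t (i + 1))
    (hγ : ∀ i, i ≤ m → 0 < γ i) (hγm : 0 ≤ γ (m + 1)) {i : ℕ} (hi : i ≤ m) : 0 < γ' i := by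
  have htm : ∀ i, i ≤ m → 0 < t (m + 1) - t i := fun i hi =>
    sub_pos.2 <| strictMonoOn_Iic_of_lt_succ (n := m + 1) (fun k hk => ht k (by omega))
      (Set.mem_Iic.2 (by omega)) (Set.mem_Iic.2 le_rfl) (by omega)
  set c := (range (m + 1)).inf' nonempty_range_add_one fun i => γ i / (t (m + 1) - t i)
  have hc : 0 < c := (lt_inf'_iff _).2 fun i hi => div_pos (hγ i (by simp at hi; omega))
    (htm i (by simp at hi; omega))
  have hlin : ∀ i, i ≤ m + 1 → c * (t (m + 1) - t i) ≤ γ i := by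
    intro i hi
    rcases Nat.lt_succ_iff_lt_or_eq.1 (Nat.lt_succ_of_le hi) with hi | rfl
    · rw [← le_div_iff₀ (htm i (by omega))]
      exact inf'_le _ (mem_range.2 hi)
    · simpa using hγm
  calc 0 < c * (t (m + 1) - t i) := mul_pos hc (htm i hi)
    _ ≤ γ' i := h.le_of_hasMonotoneSlopes _ hlin (fun k hk => by
        rw [slopeSeq_const_mul_sub c _ (ht k (by omega)),
          slopeSeq_const_mul_sub c _ (ht (k + 1) hk)]) i (by omega)

lemma slopeSeq_neg (h : IsLowerHull m t γ γ') (ht : ∀ i, i ≤ m → t i < t (i + 1))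
    (hγ : ∀ i, i ≤ m → 0 < γ i) (hγm : γ (m + 1) = 0) {i : ℕ} (hi : i ≤ m) :
    slopeSeq t γ' i < 0 := by
  refine (h.hasMonotoneSlopes.monotoneOn (Set.mem_Iic.2 hi) (Set.mem_Iic.2 le_rfl) hi).trans_lt ?_
  rw [slopeSeq, h.apply_last ht, hγm, zero_sub, neg_div]
  exact neg_neg_of_pos (div_pos (h.apply_pos ht hγ hγm.ge le_rfl) (sub_pos.2 (ht m le_rfl)))

end IsLowerHull

lemma Real.sqrt_div_mul_self (x : ℝ) {d : ℝ} (hd : 0 ≤ d) : √(x / d) * d = √(x * d) := by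
  rcases hd.eq_or_lt with rfl | hd
  · simp
  calc √(x / d) * d = √(x / d) * √(d ^ 2) := by rw [Real.sqrt_sq hd.le]
    _ = √(x / d * d ^ 2) := (Real.sqrt_mul' _ (sq_nonneg d)).symm
    _ = √(x * d) := by field_simp

lemma Real.div_sqrt_div (x : ℝ) {d : ℝ} (hd : 0 ≤ d) : x / √(x / d) = √(x * d) := by
  rcases le_or_gt x 0 with hx | hx
  · rw [Real.sqrt_eq_zero'.2 (div_nonpos_of_nonpos_of_nonneg hx hd),
      Real.sqrt_eq_zero'.2 (mul_nonpos_of_nonpos_of_nonneg hx hd), div_zero]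
  rcases hd.eq_or_lt with rfl | hd
  · simp
  rw [Real.sqrt_div' x hd.le, Real.sqrt_mul' x hd.le]
  nth_rw 1 [← Real.mul_self_sqrt hx.le]
  have := (Real.sqrt_pos.2 hd).ne'
  have := (Real.sqrt_pos.2 hx).ne'
  field_simp

lemma sum_range_sub_div_eq_sum_mul_inv_sub (m : ℕ) (e q : ℕ → ℝ) (he0 : e 0 = 0)
    (hem : e (m + 1) = 0) :
    ∑ i ∈ range (m + 1), (e i - e (i + 1)) / q i =
      ∑ i ∈ range m, e (i + 1) * ((q (i + 1))⁻¹ - (q i)⁻¹) := by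
  simp only [sub_div, sum_sub_distrib, mul_sub, ← div_eq_mul_inv]
  rw [sum_range_succ' (fun i => e i / q i), sum_range_succ (fun i => e (i + 1) / q i), he0, hem]
  simp

section Rm

variable {m : ℕ} {q t γ γ' : ℕ → ℝ}

lemma Rm_sub_Rm (h0 : γ' 0 = γ 0) (hm : γ' (m + 1) = γ (m + 1)) :
    Rm m q t γ - Rm m q t γ' = (∑ i ∈ range (m + 1), q i * (t (i + 1) - t i)) *
      ∑ i ∈ range m, (γ (i + 1) - γ' (i + 1)) * ((q (i + 1))⁻¹ - (q i)⁻¹) := by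
  rw [Rm, Rm, ← mul_sub, ← sum_sub_distrib, ← sum_range_sub_div_eq_sum_mul_inv_sub m
    (fun i => γ i - γ' i) q (by simp [h0]) (by simp [hm])]
  congr 1
  refine sum_congr rfl fun i _ => ?_
  ring

lemma Rm_le_Rm_of_le (hq : memAm m q) (ht : ∀ i, i ≤ m → t i < t (i + 1))
    (h0 : γ' 0 = γ 0) (hm : γ' (m + 1) = γ (m + 1)) (hle : ∀ i, i ≤ m → γ' i ≤ γ i) :
    Rm m q t γ' ≤ Rm m q t γ := by
  obtain ⟨-, hanti, hpos⟩ := hq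
  rw [← sub_nonneg, Rm_sub_Rm h0 hm]
  refine mul_nonneg (sum_nonneg fun i hi => ?_) (sum_nonneg fun i hi => ?_) <;>
    rw [mem_range] at hi
  · exact mul_nonneg (hpos i (by omega)).le (sub_pos.2 (ht i (by omega))).le
  · exact mul_nonneg (sub_nonneg.2 (hle (i + 1) hi))
      (sub_nonneg.2 (inv_anti₀ (hpos (i + 1) hi) (hanti i hi)))

lemma Rm_eq_Rm_of_eq (h0 : γ' 0 = γ 0) (hm : γ' (m + 1) = γ (m + 1))
    (heq : ∀ i, i < m → q (i + 1) ≠ q i → γ' (i + 1) = γ (i + 1)) :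
    Rm m q t γ' = Rm m q t γ := by
  refine (sub_eq_zero.1 ?_).symm
  rw [Rm_sub_Rm h0 hm]
  refine mul_eq_zero_of_right _ (sum_eq_zero fun i hi => ?_)
  by_cases hqi : q (i + 1) = q i
  · simp [hqi]
  · simp [heq i (mem_range.1 hi) hqi]

lemma sq_sum_sqrt_le_Rm (hq : ∀ i, i ≤ m → 0 < q i) (ht : ∀ i, i ≤ m → t i ≤ t (i + 1))
    (hγ : ∀ i, i ≤ m → γ (i + 1) ≤ γ i) :
    (∑ i ∈ range (m + 1), √((γ i - γ (i + 1)) * (t (i + 1) - t i))) ^ 2 ≤ Rm m q t γ := by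
  have hΔt : ∀ i ∈ range (m + 1), 0 ≤ q i * (t (i + 1) - t i) := fun i hi =>
    mul_nonneg (hq i (by simp at hi; omega)).le (sub_nonneg.2 (ht i (by simp at hi; omega)))
  have hΔγ : ∀ i ∈ range (m + 1), 0 ≤ (γ i - γ (i + 1)) / q i := fun i hi =>
    div_nonneg (sub_nonneg.2 (hγ i (by simp at hi; omega))) (hq i (by simp at hi; omega)).le
  calc (∑ i ∈ range (m + 1), √((γ i - γ (i + 1)) * (t (i + 1) - t i))) ^ 2
      = (∑ i ∈ range (m + 1), √(q i * (t (i + 1) - t i)) * √((γ i - γ (i + 1)) / q i)) ^ 2 := by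
        refine congrArg (· ^ 2) (sum_congr rfl fun i hi => ?_)
        rw [← Real.sqrt_mul (hΔt i hi)]
        congr 1
        field_simp [(hq i (by simp at hi; omega)).ne']
    _ ≤ (∑ i ∈ range (m + 1), √(q i * (t (i + 1) - t i)) ^ 2) *
          ∑ i ∈ range (m + 1), √((γ i - γ (i + 1)) / q i) ^ 2 :=
        sum_mul_sq_le_sq_mul_sq _ _ _
    _ = Rm m q t γ := by
        rw [Rm, sum_congr rfl fun i hi => Real.sq_sqrt (hΔt i hi),
          sum_congr rfl fun i hi => Real.sq_sqrt (hΔγ i hi)]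

lemma Rm_eq_sq_sum_sqrt {k : ℝ} (hk : k ≠ 0) (ht : ∀ i, i ≤ m → t i ≤ t (i + 1))
    (hq : ∀ i, i ≤ m → q i = k * √((γ i - γ (i + 1)) / (t (i + 1) - t i))) :
    Rm m q t γ = (∑ i ∈ range (m + 1), √((γ i - γ (i + 1)) * (t (i + 1) - t i))) ^ 2 := by
  have hΔt : ∀ i ∈ range (m + 1), 0 ≤ t (i + 1) - t i := fun i hi =>
    sub_nonneg.2 (ht i (by simp at hi; omega))
  have hleft : ∀ i ∈ range (m + 1), q i * (t (i + 1) - t i) =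
      k * √((γ i - γ (i + 1)) * (t (i + 1) - t i)) := fun i hi => by
    rw [hq i (by simp at hi; omega), mul_assoc, Real.sqrt_div_mul_self _ (hΔt i hi)]
  have hright : ∀ i ∈ range (m + 1), (γ i - γ (i + 1)) / q i =
      √((γ i - γ (i + 1)) * (t (i + 1) - t i)) / k := fun i hi => by
    rw [hq i (by simp at hi; omega), div_mul_eq_div_div_swap,
      Real.div_sqrt_div _ (hΔt i hi)]
  rw [Rm, sum_congr rfl hleft, sum_congr rfl hright, ← mul_sum, ← sum_div]
  field_simp

end Rm

lemma Real.sqrt_div_of_nonpos (x : ℝ) {y : ℝ} (hy : y ≤ 0) : √(x / y) = (√(-y))⁻¹ * √(-x) := by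
  rw [← neg_div_neg_eq, Real.sqrt_div' _ (neg_nonneg.2 hy), div_eq_inv_mul]

lemma memAm_sqrt_div {m : ℕ} {θ : ℕ → ℝ} (hmono : ∀ i, i + 1 ≤ m → θ i ≤ θ (i + 1))
    (hneg : ∀ i, i ≤ m → θ i < 0) : memAm m fun i => √(θ i / θ 0) := by
  have h0 := hneg 0 (Nat.zero_le _)
  refine ⟨by simp [div_self h0.ne], fun i hi => ?_, fun i hi => ?_⟩
  · exact Real.sqrt_le_sqrt (div_le_div_of_nonpos_of_le h0.le (hmono i hi))
  · exact Real.sqrt_pos.2 (div_pos_of_neg_of_neg (hneg i hi) h0)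

theorem stmt_18_general (m : ℕ) (t γ γ' : ℕ → ℝ)
    (htmono : ∀ i, i ≤ m → t i < t (i + 1))
    (hγpos : ∀ i, i ≤ m → 0 < γ i) (hγtop : γ (m + 1) = 0)
    -- `γ'` is the lower convex hull of the points `(t_i, γ_i)`, `0 ≤ i ≤ m+1`:
    -- the largest vector bounded above by `γ` whose slopes are nondecreasing.
    (hle : ∀ i, i ≤ m + 1 → γ' i ≤ γ i)
    (hslope : ∀ i, i + 1 ≤ m → slopeSeq t γ' i ≤ slopeSeq t γ' (i + 1))
    (hmax : ∀ δ : ℕ → ℝ, (∀ i, i ≤ m + 1 → δ i ≤ γ i) →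
      (∀ i, i + 1 ≤ m → slopeSeq t δ i ≤ slopeSeq t δ (i + 1)) →
      ∀ i, i ≤ m + 1 → δ i ≤ γ' i) :
    memAm m (fun i => Real.sqrt (slopeSeq t γ' i / slopeSeq t γ' 0)) ∧
      ∀ q, memAm m q →
        Rm m (fun i => Real.sqrt (slopeSeq t γ' i / slopeSeq t γ' 0)) t γ ≤
          Rm m q t γ := by
  have hull : IsLowerHull m t γ γ' := ⟨hle, hslope, hmax⟩
  have hθ : ∀ i, i ≤ m → slopeSeq t γ' i < 0 := fun i hi =>
    hull.slopeSeq_neg htmono hγpos hγtop hi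
  have h0 := hull.apply_zero htmono
  have hlast := hull.apply_last htmono
  have ht : ∀ i, i ≤ m → t i ≤ t (i + 1) := fun i hi => (htmono i hi).le
  refine ⟨memAm_sqrt_div hslope hθ, fun q hq => ?_⟩
  calc Rm m (fun i => √(slopeSeq t γ' i / slopeSeq t γ' 0)) t γ
      = Rm m (fun i => √(slopeSeq t γ' i / slopeSeq t γ' 0)) t γ' := by
        refine (Rm_eq_Rm_of_eq h0 hlast fun i hi hne => ?_).symm
        refine hull.apply_succ_eq_of_slopeSeq_lt htmono hi ((hslope i hi).lt_of_ne ?_)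
        exact fun heq => hne (by rw [heq])
    _ = (∑ i ∈ range (m + 1), √((γ' i - γ' (i + 1)) * (t (i + 1) - t i))) ^ 2 := by
        refine Rm_eq_sq_sum_sqrt (k := (√(-slopeSeq t γ' 0))⁻¹)
          (inv_ne_zero (Real.sqrt_pos.2 (neg_pos.2 (hθ 0 (Nat.zero_le _)))).ne') ht fun i _ => ?_
        rw [Real.sqrt_div_of_nonpos _ (hθ 0 (Nat.zero_le _)).le, neg_slopeSeq i]
    _ ≤ Rm m q t γ' := sq_sum_sqrt_le_Rm hq.2.2 ht fun i hi =>
        (slopeSeq_nonpos_iff (htmono i hi)).1 (hθ i hi).le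
    _ ≤ Rm m q t γ := Rm_le_Rm_of_le hq htmono h0 hlast fun i hi => hull.le i (by omega)

theorem stmt_18 (m : ℕ) (hm : 1 ≤ m) (t γ γ' : ℕ → ℝ)
    (ht0 : t 0 = 0) (htmono : ∀ i, i ≤ m → t i < t (i + 1))
    (htnn : ∀ i, i ≤ m + 1 → 0 ≤ t i)
    (hγpos : ∀ i, i ≤ m → 0 < γ i) (hγtop : γ (m + 1) = 0)
    -- `γ'` is the lower convex hull of the points `(t_i, γ_i)`, `0 ≤ i ≤ m+1`:
    -- the largest vector bounded above by `γ` whose slopes are nondecreasing.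
    (hle : ∀ i, i ≤ m + 1 → γ' i ≤ γ i)
    (hslope : ∀ i, i + 1 ≤ m → slopeSeq t γ' i ≤ slopeSeq t γ' (i + 1))
    (hmax : ∀ δ : ℕ → ℝ, (∀ i, i ≤ m + 1 → δ i ≤ γ i) →
      (∀ i, i + 1 ≤ m → slopeSeq t δ i ≤ slopeSeq t δ (i + 1)) →
      ∀ i, i ≤ m + 1 → δ i ≤ γ' i) :
    memAm m (fun i => Real.sqrt (slopeSeq t γ' i / slopeSeq t γ' 0)) ∧
      ∀ q, memAm m q →
        Rm m (fun i => Real.sqrt (slopeSeq t γ' i / slopeSeq t γ' 0)) t γ ≤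
          Rm m q t γ :=
  stmt_18_general m t γ γ' htmono hγpos hγtop hle hslope hmax
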